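/- Let (A⊗V,μ_{A⊗V}) and (A⊗W,μ_{A⊗W}) be weak crossed products, and suppose there exist morphisms γ:V→A⊗W and θ:W→A⊗V satisfying σ_W=(μ_A⊗W)∘(A⊗γ)∘μ_{A⊗V}∘(θ⊗θ) and (μ_A⊗V)∘(A⊗θ)∘γ=∇_{A⊗V}∘(η_A⊗V). Then (μ_A⊗W)∘(μ_A⊗σ_W)∘(A⊗γ⊗W)∘(ψ_V⊗W)∘(V⊗γ)=(μ_A⊗W)∘(A⊗γ)∘σ_V. -/

import Mathlib

/-!
Read a morphism `X ⟶ A ⊗ Y` as a Kleisli morphism for the monad `A ⊗ -`; all the morphisms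
in the statement are then Kleisli composites. The second hypothesis says that `γ` followed by
`θ` is `∇_{A⊗V} ∘ (η_A ⊗ V) = ψ_V ∘ (V ⊗ η_A)`. Substituting the formula for `σ_W`, the
leading `γ` meets the first `θ`, and the resulting `ψ_V ∘ (V ⊗ η_A)` is absorbed by the
measuring condition, so `σ_W ∘ (γ ⊗ W)` becomes `(μ_A ⊗ V) ∘ (A ⊗ σ_V) ∘ (ψ_V ⊗ V) ∘ (V ⊗ θ)`
followed by `γ`. On the left-hand side the remaining pair `γ`, `θ` again collapses to
`ψ_V ∘ (V ⊗ η_A)`, which the twisted condition moves past `σ_V`, where it becomes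
`∇_{A⊗V} ∘ σ_V = σ_V`.
-/

open CategoryTheory MonoidalCategory

universe v u

namespace WeakCrossed

variable {C : Type u} [Category.{v} C] [MonoidalCategory C]

/-- The monoid axioms for a triple `(A, η, μ)` in a monoidal category. -/
def IsMon (A : C) (eta : 𝟙_ C ⟶ A) (mu : A ⊗ A ⟶ A) : Prop :=
  (eta ▷ A) ≫ mu = (λ_ A).hom ∧ (A ◁ eta) ≫ mu = (ρ_ A).hom ∧
    (mu ▷ A) ≫ mu = (α_ A A A).hom ≫ (A ◁ mu) ≫ mu

/-- The morphism `(μ_A ⊗ Y) ∘ (A ⊗ f) : (A ⊗ X) ⊗ Z ⟶ A ⊗ Y` for `f : X ⊗ Z ⟶ A ⊗ Y`. -/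
def phi (A : C) {X Z Y : C} (mu : A ⊗ A ⟶ A) (f : X ⊗ Z ⟶ A ⊗ Y) :
    (A ⊗ X) ⊗ Z ⟶ A ⊗ Y :=
  (α_ A X Z).hom ≫ (A ◁ f) ≫ (α_ A A Y).inv ≫ (mu ▷ Y)

/-- The measuring condition `(μ_A ⊗ V) ∘ (A ⊗ ψ) ∘ (ψ ⊗ A) = ψ ∘ (V ⊗ μ_A)`. -/
def Measuring (A V : C) (mu : A ⊗ A ⟶ A) (psi : V ⊗ A ⟶ A ⊗ V) : Prop :=
  (psi ▷ A) ≫ phi A mu psi = (α_ V A A).hom ≫ (V ◁ mu) ≫ psi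

/-- The idempotent `∇_{A⊗V} = (μ_A ⊗ V) ∘ (A ⊗ ψ) ∘ (A ⊗ V ⊗ η_A)`. -/
def nabla (A V : C) (eta : 𝟙_ C ⟶ A) (mu : A ⊗ A ⟶ A) (psi : V ⊗ A ⟶ A ⊗ V) :
    A ⊗ V ⟶ A ⊗ V :=
  (ρ_ (A ⊗ V)).inv ≫ ((A ⊗ V) ◁ eta) ≫ phi A mu psi

/-- The twisted condition
`(μ_A ⊗ V) ∘ (A ⊗ ψ) ∘ (σ ⊗ A) = (μ_A ⊗ V) ∘ (A ⊗ σ) ∘ (ψ ⊗ V) ∘ (V ⊗ ψ)`. -/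
def Twisted (A V : C) (mu : A ⊗ A ⟶ A) (psi : V ⊗ A ⟶ A ⊗ V)
    (sig : V ⊗ V ⟶ A ⊗ V) : Prop :=
  (sig ▷ A) ≫ phi A mu psi =
    (α_ V V A).hom ≫ (V ◁ psi) ≫ (α_ V A V).inv ≫ (psi ▷ V) ≫ phi A mu sig

/-- The cocycle condition
`(μ_A ⊗ V) ∘ (A ⊗ σ) ∘ (σ ⊗ V) = (μ_A ⊗ V) ∘ (A ⊗ σ) ∘ (ψ ⊗ V) ∘ (V ⊗ σ)`. -/
def Cocycle (A V : C) (mu : A ⊗ A ⟶ A) (psi : V ⊗ A ⟶ A ⊗ V)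
    (sig : V ⊗ V ⟶ A ⊗ V) : Prop :=
  (sig ▷ V) ≫ phi A mu sig =
    (α_ V V V).hom ≫ (V ◁ sig) ≫ (α_ V A V).inv ≫ (psi ▷ V) ≫ phi A mu sig

/-- The weak crossed product multiplication
`μ_{A⊗V} = (μ_A ⊗ V) ∘ (μ_A ⊗ σ) ∘ (A ⊗ ψ ⊗ V)`. -/
def prodAV (A V : C) (mu : A ⊗ A ⟶ A) (psi : V ⊗ A ⟶ A ⊗ V)
    (sig : V ⊗ V ⟶ A ⊗ V) : (A ⊗ V) ⊗ (A ⊗ V) ⟶ A ⊗ V :=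
  (α_ A V (A ⊗ V)).hom ≫ (A ◁ ((α_ V A V).inv ≫ (psi ▷ V) ≫ (α_ A V V).hom)) ≫
    (α_ A A (V ⊗ V)).inv ≫ (mu ⊗ₘ sig) ≫ (α_ A A V).inv ≫ (mu ▷ V)

/-- The morphism `η_A ⊗ V : V ⟶ A ⊗ V`. -/
def etaT (A V : C) (eta : 𝟙_ C ⟶ A) : V ⟶ A ⊗ V := (λ_ V).inv ≫ (eta ▷ V)

/-- The morphism `β_ν = (μ_A ⊗ V) ∘ (A ⊗ ν) : A ⟶ A ⊗ V`. -/
def beta (A V : C) (mu : A ⊗ A ⟶ A) (nu : 𝟙_ C ⟶ A ⊗ V) : A ⟶ A ⊗ V :=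
  (ρ_ A).inv ≫ (A ◁ nu) ≫ (α_ A A V).inv ≫ (mu ▷ V)

/-- Preunit condition (pre1):
`(μ_A ⊗ V) ∘ (A ⊗ σ) ∘ (ψ ⊗ V) ∘ (V ⊗ ν) = ∇_{A⊗V} ∘ (η_A ⊗ V)`. -/
def Pre1 (A V : C) (eta : 𝟙_ C ⟶ A) (mu : A ⊗ A ⟶ A) (psi : V ⊗ A ⟶ A ⊗ V)
    (sig : V ⊗ V ⟶ A ⊗ V) (nu : 𝟙_ C ⟶ A ⊗ V) : Prop :=
  (ρ_ V).inv ≫ (V ◁ nu) ≫ (α_ V A V).inv ≫ (psi ▷ V) ≫ phi A mu sig =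
    etaT A V eta ≫ nabla A V eta mu psi

/-- Preunit condition (pre2):
`(μ_A ⊗ V) ∘ (A ⊗ σ) ∘ (ν ⊗ V) = ∇_{A⊗V} ∘ (η_A ⊗ V)`. -/
def Pre2 (A V : C) (eta : 𝟙_ C ⟶ A) (mu : A ⊗ A ⟶ A) (psi : V ⊗ A ⟶ A ⊗ V)
    (sig : V ⊗ V ⟶ A ⊗ V) (nu : 𝟙_ C ⟶ A ⊗ V) : Prop :=
  (λ_ V).inv ≫ (nu ▷ V) ≫ phi A mu sig = etaT A V eta ≫ nabla A V eta mu psi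

/-- Preunit condition (pre3): `(μ_A ⊗ V) ∘ (A ⊗ ψ) ∘ (ν ⊗ A) = β_ν`. -/
def Pre3 (A V : C) (mu : A ⊗ A ⟶ A) (psi : V ⊗ A ⟶ A ⊗ V)
    (nu : 𝟙_ C ⟶ A ⊗ V) : Prop :=
  (λ_ A).inv ≫ (nu ▷ A) ≫ phi A mu psi = beta A V mu nu

/-- `(A ⊗ V, μ_{A⊗V})` is a weak crossed product: measuring, twisted and cocycle
conditions hold and `∇_{A⊗V} ∘ σ = σ`. -/
def WCP (A V : C) (eta : 𝟙_ C ⟶ A) (mu : A ⊗ A ⟶ A) (psi : V ⊗ A ⟶ A ⊗ V)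
    (sig : V ⊗ V ⟶ A ⊗ V) : Prop :=
  Measuring A V mu psi ∧ Twisted A V mu psi sig ∧ Cocycle A V mu psi sig ∧
    sig ≫ nabla A V eta mu psi = sig

/-- `(A ⊗ V, μ_{A⊗V})` is a weak crossed product with preunit `ν`. -/
def WCPpre (A V : C) (eta : 𝟙_ C ⟶ A) (mu : A ⊗ A ⟶ A) (psi : V ⊗ A ⟶ A ⊗ V)
    (sig : V ⊗ V ⟶ A ⊗ V) (nu : 𝟙_ C ⟶ A ⊗ V) : Prop :=
  WCP A V eta mu psi sig ∧ Pre1 A V eta mu psi sig nu ∧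
    Pre2 A V eta mu psi sig nu ∧ Pre3 A V mu psi nu

/-- `(μ_A ⊗ Y) ∘ (A ⊗ γ) : A ⊗ X ⟶ A ⊗ Y` for `γ : X ⟶ A ⊗ Y`. -/
def tmap (A : C) {X Y : C} (mu : A ⊗ A ⟶ A) (g : X ⟶ A ⊗ Y) : A ⊗ X ⟶ A ⊗ Y :=
  (A ◁ g) ≫ (α_ A A Y).inv ≫ (mu ▷ Y)

/-- Left `A`-linearity of `T : A ⊗ X ⟶ A ⊗ Y`:
`T ∘ (μ_A ⊗ X) = (μ_A ⊗ Y) ∘ (A ⊗ T)`. -/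
def LeftLin (A : C) {X Y : C} (mu : A ⊗ A ⟶ A) (T : A ⊗ X ⟶ A ⊗ Y) : Prop :=
  (mu ▷ X) ≫ T = (α_ A A X).hom ≫ (A ◁ T) ≫ (α_ A A Y).inv ≫ (mu ▷ Y)

/-- `ν` is a preunit for the associative product `m` on `X`. -/
def IsPreunit {X : C} (m : X ⊗ X ⟶ X) (nu : 𝟙_ C ⟶ X) : Prop :=
  (ρ_ X).inv ≫ (X ◁ nu) ≫ m = (λ_ X).inv ≫ (nu ▷ X) ≫ m ∧
  (ρ_ X).inv ≫ (X ◁ nu) ≫ m =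
    (ρ_ X).inv ≫ (X ◁ ((λ_ (𝟙_ C)).inv ≫ (nu ⊗ₘ nu) ≫ m)) ≫ m

/-- Brzeziński normalization conditions: `ψ ∘ (η_V ⊗ A) = A ⊗ η_V`,
`ψ ∘ (V ⊗ η_A) = η_A ⊗ V`, `σ ∘ (η_V ⊗ V) = σ ∘ (V ⊗ η_V) = η_A ⊗ V`. -/
def BrzNorm (A V : C) (eta : 𝟙_ C ⟶ A) (etaV : 𝟙_ C ⟶ V) (psi : V ⊗ A ⟶ A ⊗ V)
    (sig : V ⊗ V ⟶ A ⊗ V) : Prop :=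
  (λ_ A).inv ≫ (etaV ▷ A) ≫ psi = (ρ_ A).inv ≫ (A ◁ etaV) ∧
  (ρ_ V).inv ≫ (V ◁ eta) ≫ psi = (λ_ V).inv ≫ (eta ▷ V) ∧
  (λ_ V).inv ≫ (etaV ▷ V) ≫ sig = (λ_ V).inv ≫ (eta ▷ V) ∧
  (ρ_ V).inv ≫ (V ◁ etaV) ≫ sig = (λ_ V).inv ≫ (eta ▷ V)

section Kleisli

variable {A : C} (mu : A ⊗ A ⟶ A)

/-- `(μ_A ⊗ T) ∘ (A ⊗ h) ∘ (f ⊗ Z)`: Kleisli composition for the monad `A ⊗ -`,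
after whiskering `f` by `Z`. -/
def kcomp {X Y Z T : C} (f : X ⟶ A ⊗ Y) (h : Y ⊗ Z ⟶ A ⊗ T) : X ⊗ Z ⟶ A ⊗ T :=
  (f ▷ Z) ≫ phi A mu h

theorem whiskerLeft_tmap {X' X Y : C} (x : X' ⟶ X) (f : X ⟶ A ⊗ Y) :
    (A ◁ x) ≫ tmap A mu f = tmap A mu (x ≫ f) := by
  simp [tmap]

theorem leftLin_tmap (hassoc : (mu ▷ A) ≫ mu = (α_ A A A).hom ≫ (A ◁ mu) ≫ mu)
    {X Y : C} (f : X ⟶ A ⊗ Y) : LeftLin A mu (tmap A mu f) := by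
  simp only [LeftLin, tmap]
  rw [← whisker_exchange_assoc, associator_inv_naturality_left_assoc,
    ← comp_whiskerRight, hassoc]
  simp only [comp_whiskerRight, Category.assoc, MonoidalCategory.whiskerLeft_comp]
  monoidal

theorem tmap_comp_tmap (hassoc : (mu ▷ A) ≫ mu = (α_ A A A).hom ≫ (A ◁ mu) ≫ mu)
    {X Y Z : C} (f : X ⟶ A ⊗ Y) (h : Y ⟶ A ⊗ Z) :
    tmap A mu f ≫ tmap A mu h = tmap A mu (f ≫ tmap A mu h) := by
  conv_lhs => rw [tmap]
  rw [Category.assoc, Category.assoc, leftLin_tmap mu hassoc h, ← whiskerLeft_tmap]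
  simp [tmap]

theorem etaT_comp_tmap (eta : 𝟙_ C ⟶ A) (hl : (eta ▷ A) ≫ mu = (λ_ A).hom)
    {X Y : C} (f : X ⟶ A ⊗ Y) : etaT A X eta ≫ tmap A mu f = f := by
  simp only [etaT, tmap, Category.assoc]
  rw [← whisker_exchange_assoc, ← leftUnitor_inv_naturality_assoc,
    associator_inv_naturality_left_assoc, ← comp_whiskerRight, hl]
  monoidal

theorem nabla_eq_tmap (eta : 𝟙_ C ⟶ A) {V : C} (psi : V ⊗ A ⟶ A ⊗ V) :
    nabla A V eta mu psi = tmap A mu ((ρ_ V).inv ≫ (V ◁ eta) ≫ psi) := by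
  simp only [nabla, phi, tmap, MonoidalCategory.whiskerLeft_comp, Category.assoc]
  monoidal

theorem etaT_comp_nabla (eta : 𝟙_ C ⟶ A) (hl : (eta ▷ A) ≫ mu = (λ_ A).hom)
    {V : C} (psi : V ⊗ A ⟶ A ⊗ V) :
    etaT A V eta ≫ nabla A V eta mu psi = (ρ_ V).inv ≫ (V ◁ eta) ≫ psi := by
  rw [nabla_eq_tmap, etaT_comp_tmap mu eta hl]

theorem mul_tensorHom_eq_tmap_comp_tmap {X Y Z : C} (f : X ⟶ A ⊗ Y) (h : Y ⟶ A ⊗ Z) :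
    (A ◁ f) ≫ (α_ A A Y).inv ≫ (mu ⊗ₘ h) ≫ (α_ A A Z).inv ≫ (mu ▷ Z) =
      tmap A mu f ≫ tmap A mu h := by
  simp [tmap, MonoidalCategory.tensorHom_def]

theorem kcomp_eq_tmap {X Y Z T : C} (f : X ⟶ A ⊗ Y) (h : Y ⊗ Z ⟶ A ⊗ T) :
    kcomp mu f h = (f ▷ Z) ≫ (α_ A Y Z).hom ≫ tmap A mu h := by
  simp [kcomp, phi, tmap]

theorem whiskerRight_kcomp {X' X Y Z T : C} (p : X' ⟶ X) (f : X ⟶ A ⊗ Y)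
    (h : Y ⊗ Z ⟶ A ⊗ T) : (p ▷ Z) ≫ kcomp mu f h = kcomp mu (p ≫ f) h := by
  simp [kcomp]

theorem kcomp_whiskerLeft {X Y Z' Z T : C} (f : X ⟶ A ⊗ Y) (k : Z' ⟶ Z)
    (h : Y ⊗ Z ⟶ A ⊗ T) : kcomp mu f ((Y ◁ k) ≫ h) = (X ◁ k) ≫ kcomp mu f h := by
  simp only [kcomp_eq_tmap, ← whiskerLeft_tmap]
  rw [← associator_naturality_right_assoc, whisker_exchange_assoc]

theorem kcomp_comp_tmap (hassoc : (mu ▷ A) ≫ mu = (α_ A A A).hom ≫ (A ◁ mu) ≫ mu)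
    {X Y Z T S : C} (f : X ⟶ A ⊗ Y) (h : Y ⊗ Z ⟶ A ⊗ T) (k : T ⟶ A ⊗ S) :
    kcomp mu f (h ≫ tmap A mu k) = kcomp mu f h ≫ tmap A mu k := by
  simp only [kcomp_eq_tmap, ← tmap_comp_tmap mu hassoc, Category.assoc]

theorem kcomp_kcomp (hassoc : (mu ▷ A) ≫ mu = (α_ A A A).hom ≫ (A ◁ mu) ≫ mu)
    {X Y T Z S : C} (f : X ⟶ A ⊗ Y) (h : Y ⟶ A ⊗ T) (k : T ⊗ Z ⟶ A ⊗ S) :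
    kcomp mu f (kcomp mu h k) = kcomp mu (f ≫ tmap A mu h) k := by
  simp only [kcomp_eq_tmap]
  rw [← Category.assoc (h ▷ Z), ← tmap_comp_tmap mu hassoc]
  simp only [tmap, MonoidalCategory.whiskerLeft_comp, comp_whiskerRight, Category.assoc]
  monoidal

theorem kcomp_assoc (hassoc : (mu ▷ A) ≫ mu = (α_ A A A).hom ≫ (A ◁ mu) ≫ mu)
    {X Y Z U T S : C} (f : X ⟶ A ⊗ Y) (h : Y ⊗ Z ⟶ A ⊗ T) (k : T ⊗ U ⟶ A ⊗ S) :
    kcomp mu f ((α_ Y Z U).inv ≫ kcomp mu h k) =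
      (α_ X Z U).inv ≫ kcomp mu (kcomp mu f h) k := by
  simp only [kcomp_eq_tmap]
  rw [← Category.assoc (h ▷ U), ← Category.assoc (α_ Y Z U).inv, ← tmap_comp_tmap mu hassoc]
  simp only [tmap, MonoidalCategory.whiskerLeft_comp, comp_whiskerRight, Category.assoc]
  monoidal

theorem kcomp_kcomp_eq_mul_tensorHom
    (hassoc : (mu ▷ A) ≫ mu = (α_ A A A).hom ≫ (A ◁ mu) ≫ mu)
    {X Y Z T : C} (p : X ⟶ A ⊗ Y) (f : Y ⟶ A ⊗ Z) (s : Z ⊗ T ⟶ A ⊗ T) :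
    kcomp mu p (kcomp mu f s) =
      (p ▷ T) ≫ (α_ A Y T).hom ≫ (A ◁ ((f ▷ T) ≫ (α_ A Z T).hom)) ≫
        (α_ A A (Z ⊗ T)).inv ≫ (mu ⊗ₘ s) ≫ (α_ A A T).inv ≫ (mu ▷ T) := by
  rw [mul_tensorHom_eq_tmap_comp_tmap, tmap_comp_tmap mu hassoc, kcomp_eq_tmap, kcomp_eq_tmap,
    Category.assoc]

theorem tensorHom_prodAV {V W W' : C} (x : W ⟶ A ⊗ V) (y : W' ⟶ A ⊗ V)
    (psi : V ⊗ A ⟶ A ⊗ V) (sig : V ⊗ V ⟶ A ⊗ V) :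
    (x ⊗ₘ y) ≫ prodAV A V mu psi sig =
      (W ◁ y) ≫ (α_ W A V).inv ≫ kcomp mu (kcomp mu x psi) sig := by
  have hprod : prodAV A V mu psi sig =
      (α_ (A ⊗ V) A V).inv ≫ kcomp mu (phi A mu psi) sig := by
    simp only [prodAV, kcomp_eq_tmap, phi, tmap, MonoidalCategory.tensorHom_def,
      comp_whiskerRight, MonoidalCategory.whiskerLeft_comp, Category.assoc]
    monoidal
  rw [hprod, show kcomp mu x psi = (x ▷ A) ≫ phi A mu psi from rfl, ← whiskerRight_kcomp,
    tensorHom_def'_assoc, associator_inv_naturality_left_assoc]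

end Kleisli

section CrossedProduct

variable {A V : C} {eta : 𝟙_ C ⟶ A} {mu : A ⊗ A ⟶ A} {psi : V ⊗ A ⟶ A ⊗ V}

theorem Measuring.kcomp_self (hm : Measuring A V mu psi) :
    kcomp mu psi psi = (α_ V A A).hom ≫ (V ◁ mu) ≫ psi :=
  hm

theorem Measuring.kcomp_unit (hm : Measuring A V mu psi)
    (hl : (eta ▷ A) ≫ mu = (λ_ A).hom) :
    kcomp mu ((ρ_ V).inv ≫ (V ◁ eta) ≫ psi) psi = psi := by
  rw [← whiskerRight_kcomp, ← whiskerRight_kcomp, hm.kcomp_self,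
    associator_naturality_middle_assoc, ← MonoidalCategory.whiskerLeft_comp_assoc, hl]
  monoidal

theorem Measuring.whiskerLeft_kcomp_whiskerLeft_kcomp
    (hassoc : (mu ▷ A) ≫ mu = (α_ A A A).hom ≫ (A ◁ mu) ≫ mu)
    (hm : Measuring A V mu psi) {X Y T : C} (f : X ⟶ A ⊗ Y) (k : Y ⟶ A ⊗ V)
    (s : V ⊗ V ⟶ A ⊗ T) :
    (V ◁ f) ≫ (α_ V A Y).inv ≫ kcomp mu psi ((V ◁ k) ≫ (α_ V A V).inv ≫ kcomp mu psi s) =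
      (V ◁ (f ≫ tmap A mu k)) ≫ (α_ V A V).inv ≫ kcomp mu psi s := by
  rw [kcomp_whiskerLeft, kcomp_assoc mu hassoc, hm.kcomp_self,
    ← Category.assoc (α_ V A A).hom, ← whiskerRight_kcomp]
  simp only [tmap, comp_whiskerRight, MonoidalCategory.whiskerLeft_comp, Category.assoc]
  monoidal

theorem Twisted.whiskerLeft_kcomp {sig : V ⊗ V ⟶ A ⊗ V} (htw : Twisted A V mu psi sig) :
    (V ◁ psi) ≫ (α_ V A V).inv ≫ kcomp mu psi sig = (α_ V V A).inv ≫ kcomp mu sig psi := by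
  rw [kcomp, kcomp, htw, Iso.inv_hom_id_assoc]

theorem Twisted.whiskerLeft_unit_kcomp {sig : V ⊗ V ⟶ A ⊗ V}
    (htw : Twisted A V mu psi sig) (hnab : sig ≫ nabla A V eta mu psi = sig) :
    (V ◁ ((ρ_ V).inv ≫ (V ◁ eta) ≫ psi)) ≫ (α_ V A V).inv ≫ kcomp mu psi sig = sig := by
  rw [MonoidalCategory.whiskerLeft_comp, MonoidalCategory.whiskerLeft_comp, Category.assoc,
    Category.assoc, htw.whiskerLeft_kcomp, associator_inv_naturality_right_assoc, kcomp,
    whisker_exchange_assoc]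
  have hunit : (V ◁ (ρ_ V).inv) ≫ (α_ V V (𝟙_ C)).inv ≫ (sig ▷ 𝟙_ C) =
      sig ≫ (ρ_ (A ⊗ V)).inv := by monoidal
  rw [reassoc_of% hunit]
  simpa only [nabla, Category.assoc] using hnab

theorem Measuring.kcomp_tensorHom_prodAV
    (hassoc : (mu ▷ A) ≫ mu = (α_ A A A).hom ≫ (A ◁ mu) ≫ mu)
    (hl : (eta ▷ A) ≫ mu = (λ_ A).hom) (hm : Measuring A V mu psi) {W : C}
    (g : V ⟶ A ⊗ W) (th : W ⟶ A ⊗ V)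
    (hgth : g ≫ tmap A mu th = (ρ_ V).inv ≫ (V ◁ eta) ≫ psi) (sig : V ⊗ V ⟶ A ⊗ V) :
    kcomp mu g ((th ⊗ₘ th) ≫ prodAV A V mu psi sig) =
      (V ◁ th) ≫ (α_ V A V).inv ≫ kcomp mu psi sig := by
  rw [tensorHom_prodAV, kcomp_whiskerLeft, kcomp_assoc mu hassoc, kcomp_kcomp mu hassoc,
    hgth, hm.kcomp_unit hl]

end CrossedProduct

theorem prop_equiv_general (A V W : C) (eta : 𝟙_ C ⟶ A) (mu : A ⊗ A ⟶ A)
    (hA : IsMon A eta mu)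
    (psiV : V ⊗ A ⟶ A ⊗ V) (sigV : V ⊗ V ⟶ A ⊗ V)
    (sigW : W ⊗ W ⟶ A ⊗ W)
    (hV : WCP A V eta mu psiV sigV)
    (g : V ⟶ A ⊗ W) (th : W ⟶ A ⊗ V)
    (h4 : sigW = (th ⊗ₘ th) ≫ prodAV A V mu psiV sigV ≫ tmap A mu g)
    (h5 : g ≫ tmap A mu th = etaT A V eta ≫ nabla A V eta mu psiV) :
    (V ◁ g) ≫ (α_ V A W).inv ≫ (psiV ▷ W) ≫ (α_ A V W).hom ≫
        (A ◁ ((g ▷ W) ≫ (α_ A W W).hom)) ≫ (α_ A A (W ⊗ W)).inv ≫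
        (mu ⊗ₘ sigW) ≫ (α_ A A W).inv ≫ (mu ▷ W) =
      sigV ≫ tmap A mu g := by
  obtain ⟨hl, -, hassoc⟩ := hA
  obtain ⟨hm, htw, -, hnab⟩ := hV
  have hgth : g ≫ tmap A mu th = (ρ_ V).inv ≫ (V ◁ eta) ≫ psiV := by
    rw [h5, etaT_comp_nabla mu eta hl]
  have hsigW : kcomp mu g sigW =
      (V ◁ th) ≫ (α_ V A V).inv ≫ kcomp mu psiV (sigV ≫ tmap A mu g) := by
    rw [h4, ← Category.assoc, kcomp_comp_tmap mu hassoc,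
      hm.kcomp_tensorHom_prodAV hassoc hl g th hgth, kcomp_comp_tmap mu hassoc]
    simp only [Category.assoc]
  calc _ = (V ◁ g) ≫ (α_ V A W).inv ≫ kcomp mu psiV (kcomp mu g sigW) := by
          rw [kcomp_kcomp_eq_mul_tensorHom mu hassoc]
    _ = (V ◁ (g ≫ tmap A mu th)) ≫ (α_ V A V).inv ≫ kcomp mu psiV (sigV ≫ tmap A mu g) := by
          rw [hsigW, hm.whiskerLeft_kcomp_whiskerLeft_kcomp hassoc]
    _ = sigV ≫ tmap A mu g := by
          rw [hgth, kcomp_comp_tmap mu hassoc, reassoc_of% (htw.whiskerLeft_unit_kcomp hnab)]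

/-- Proposition: if `σ_W` is induced by `γ`, `θ` and
`(μ_A⊗V)∘(A⊗θ)∘γ = ∇_{A⊗V}∘(η_A⊗V)`, then
`(μ_A⊗W)∘(μ_A⊗σ_W)∘(A⊗γ⊗W)∘(ψ_V⊗W)∘(V⊗γ) = (μ_A⊗W)∘(A⊗γ)∘σ_V`. -/
theorem prop_equiv (A V W : C) (eta : 𝟙_ C ⟶ A) (mu : A ⊗ A ⟶ A)
    (hA : IsMon A eta mu)
    (psiV : V ⊗ A ⟶ A ⊗ V) (sigV : V ⊗ V ⟶ A ⊗ V)
    (psiW : W ⊗ A ⟶ A ⊗ W) (sigW : W ⊗ W ⟶ A ⊗ W)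
    (hV : WCP A V eta mu psiV sigV) (hW : WCP A W eta mu psiW sigW)
    (g : V ⟶ A ⊗ W) (th : W ⟶ A ⊗ V)
    (h4 : sigW = (th ⊗ₘ th) ≫ prodAV A V mu psiV sigV ≫ tmap A mu g)
    (h5 : g ≫ tmap A mu th = etaT A V eta ≫ nabla A V eta mu psiV) :
    (V ◁ g) ≫ (α_ V A W).inv ≫ (psiV ▷ W) ≫ (α_ A V W).hom ≫
        (A ◁ ((g ▷ W) ≫ (α_ A W W).hom)) ≫ (α_ A A (W ⊗ W)).inv ≫
        (mu ⊗ₘ sigW) ≫ (α_ A A W).inv ≫ (mu ▷ W) =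
      sigV ≫ tmap A mu g :=
  prop_equiv_general A V W eta mu hA psiV sigV sigW hV g th h4 h5

end WeakCrossed
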